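/- arXiv:2010.00932 — 2 statements merged into one kernel-verified Lean document; each statement's English description precedes it below -/
import Mathlib

section
/- Among the three values h = exp(mπi/24) with m ∈ {3, 19, 35} satisfying h^3 = exp(3πi/8), only m = 19 and m = 35 give primitive 48th roots of unity, and only m = 19 satisfies 24·(h^2+h^{-2})^{-2} = 6·(sin(π/12))^{-2}. -/
open Real

lemma key_cos (x : ℝ) :
    Complex.exp (x * Complex.I) ^ 2 + (Complex.exp (x * Complex.I))⁻¹ ^ 2
      = 2 * (Real.cos (2 * x) : ℂ) := by
  rw [← Complex.exp_neg, ← Complex.exp_nat_mul, ← Complex.exp_nat_mul]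
  have h1 : (2:ℕ) * ((x:ℂ) * Complex.I) = ((2*x : ℝ) : ℂ) * Complex.I := by push_cast; ring
  have h2 : (2:ℕ) * (-((x:ℂ) * Complex.I)) = (-(2*x : ℝ) : ℂ) * Complex.I := by push_cast; ring
  rw [h1, h2, Complex.exp_mul_I, Complex.exp_mul_I]
  rw [Complex.ofReal_cos]
  push_cast
  rw [Complex.cos_neg, Complex.sin_neg]
  ring

theorem identify_h_for_sl2_10 (m : ℕ) (hm : m = 3 ∨ m = 19 ∨ m = 35) :
    let h : ℂ := Complex.exp (m * Real.pi * Complex.I / 24)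
    (IsPrimitiveRoot h 48 ↔ (m = 19 ∨ m = 35)) ∧
    (24 / (h ^ 2 + h⁻¹ ^ 2) ^ 2 = 6 / (Real.sin (Real.pi / 12) : ℂ) ^ 2 ↔ m = 19) := by
  intro h
  have spos : 0 < Real.sin (π/12) :=
    Real.sin_pos_of_pos_of_lt_pi (by positivity) (by nlinarith [pi_pos])
  have s2 : Real.sin (π/12) ^ 2 = 1/2 - Real.sqrt 3/4 := by
    rw [Real.sin_sq_eq_half_sub]
    rw [show 2*(π/12) = π/6 by ring, Real.cos_pi_div_six]
    ring
  have hs3 : Real.sqrt 3 ^ 2 = 3 := Real.sq_sqrt (by norm_num)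
  have hs3pos : 0 < Real.sqrt 3 := Real.sqrt_pos.mpr (by norm_num)
  rcases hm with rfl | rfl | rfl
  · -- m = 3
    constructor
    · constructor
      · intro hp
        exfalso
        have h16 : h ^ 16 = 1 := by
          show Complex.exp _ ^ 16 = 1
          rw [← Complex.exp_nat_mul]
          rw [show (16:ℕ) * ((3:ℕ) * (π:ℂ) * Complex.I / 24) = 2*π*Complex.I by push_cast; ring]
          exact Complex.exp_two_pi_mul_I
        have := Nat.le_of_dvd (by norm_num) (hp.dvd_of_pow_eq_one 16 h16)
        omega
      · rintro (h | h) <;> omega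
    · constructor
      · intro heq
        exfalso
        have hsum : h ^ 2 + h⁻¹ ^ 2 = 2 * (Real.cos (2 * ((3:ℕ)*π/24)) : ℂ) := by
          have : ((3:ℕ) * (π:ℂ) * Complex.I / 24) = (((3:ℕ)*π/24 : ℝ) : ℂ) * Complex.I := by
            push_cast; ring
          rw [show h = Complex.exp ((3:ℕ) * (π:ℂ) * Complex.I / 24) from rfl, this, key_cos]
        rw [hsum, show 2 * ((3:ℕ)*π/24) = π/4 by push_cast; ring, Real.cos_pi_div_four] at heq
        have hs2 : Real.sqrt 2 ^ 2 = 2 := Real.sq_sqrt (by norm_num)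
        have heq' : (24 : ℝ) / (2 * (Real.sqrt 2/2)) ^ 2 = 6 / Real.sin (π/12) ^ 2 := by
          exact_mod_cast heq
        have hsne : Real.sin (π/12) ≠ 0 := ne_of_gt spos
        have h2ne : Real.sqrt 2 ≠ 0 := by positivity
        field_simp at heq'
        nlinarith [heq', hs2, s2, hs3, spos]
      · intro hh; omega
  · -- m = 19
    constructor
    · constructor
      · intro _; left; rfl
      · intro _
        have := Complex.isPrimitiveRoot_exp_of_coprime 19 48 (by norm_num) (by norm_num)
        have heq : ((19:ℕ) * (π:ℂ) * Complex.I / 24) = 2*π*Complex.I*((19:ℕ)/(48:ℕ)) := by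
          push_cast; ring
        show IsPrimitiveRoot (Complex.exp _) 48
        rw [heq]
        exact this
    · constructor
      · intro _; rfl
      · intro _
        have hsum : h ^ 2 + h⁻¹ ^ 2 = 2 * (Real.cos (2 * ((19:ℕ)*π/24)) : ℂ) := by
          have : ((19:ℕ) * (π:ℂ) * Complex.I / 24) = (((19:ℕ)*π/24 : ℝ) : ℂ) * Complex.I := by
            push_cast; ring
          rw [show h = Complex.exp ((19:ℕ) * (π:ℂ) * Complex.I / 24) from rfl, this, key_cos]
        have hc : Real.cos (2 * ((19:ℕ)*π/24)) = Real.sin (π/12) := by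
          rw [show 2 * ((19:ℕ)*π/24) = -(π/2 - π/12) + 2*π by push_cast; ring,
            Real.cos_add_two_pi, Real.cos_neg, Real.cos_pi_div_two_sub]
        rw [hsum, hc]
        have hsne : Real.sin (π/12) ≠ 0 := ne_of_gt spos
        have : (24 : ℝ) / (2 * Real.sin (π/12)) ^ 2 = 6 / Real.sin (π/12) ^ 2 := by
          field_simp; ring
        exact_mod_cast congrArg (Complex.ofReal) this
  · -- m = 35
    constructor
    · constructor
      · intro _; right; rfl
      · intro _
        have := Complex.isPrimitiveRoot_exp_of_coprime 35 48 (by norm_num) (by norm_num)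
        have heq : ((35:ℕ) * (π:ℂ) * Complex.I / 24) = 2*π*Complex.I*((35:ℕ)/(48:ℕ)) := by
          push_cast; ring
        show IsPrimitiveRoot (Complex.exp _) 48
        rw [heq]
        exact this
    · constructor
      · intro heq
        exfalso
        have hsum : h ^ 2 + h⁻¹ ^ 2 = 2 * (Real.cos (2 * ((35:ℕ)*π/24)) : ℂ) := by
          have : ((35:ℕ) * (π:ℂ) * Complex.I / 24) = (((35:ℕ)*π/24 : ℝ) : ℂ) * Complex.I := by
            push_cast; ring
          rw [show h = Complex.exp ((35:ℕ) * (π:ℂ) * Complex.I / 24) from rfl, this, key_cos]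
        have hc : Real.cos (2 * ((35:ℕ)*π/24)) = -Real.cos (π/12) := by
          rw [show 2 * ((35:ℕ)*π/24) = (π - π/12) + 2*π by push_cast; ring,
            Real.cos_add_two_pi, Real.cos_pi_sub]
        rw [hsum, hc] at heq
        have hcpos : 0 < Real.cos (π/12) :=
          Real.cos_pos_of_mem_Ioo ⟨by nlinarith [pi_pos], by nlinarith [pi_pos]⟩
        have heq' : (24 : ℝ) / (2 * (-Real.cos (π/12))) ^ 2 = 6 / Real.sin (π/12) ^ 2 := by
          exact_mod_cast heq
        have hcsq : Real.cos (π/12) ^ 2 = 1 - Real.sin (π/12) ^ 2 := Real.cos_sq' _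
        have hsne : Real.sin (π/12) ≠ 0 := ne_of_gt spos
        have hcne : Real.cos (π/12) ≠ 0 := ne_of_gt hcpos
        field_simp at heq'
        nlinarith [heq', hcsq, s2, hs3, hs3pos]
      · intro hh; omega
end

section
/- The map sending a primitive 48th root of unity h and a sign ε ∈ {±1} to the triple (24·(h^2+h^{-2})^{-2}, ε·h^{-3}, -ε·(h^{10}+h^{-10})) ∈ ℂ^3 is injective on the 32 pairs (h, ε). -/
/-!
Put `w = h₂ / h₁`. The anomalies force `w ^ 3 = ε₁ ε₂ = ±1`, and after this substitution the
equality of the `Ψ₁`-dimensions becomes `(1 - w) (w h₁ ^ 20 - 1) = 0`. The second factor cannot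
vanish: it would give `h₁ ^ 120 = 1`, whereas `48 ∤ 120`. Hence `w = 1`, and then `ε₁ ε₂ = 1`.
-/

lemma eq_one_or_pow_two_mul_mul_eq_one {K : Type*} [Field K] {x w : K} (n : ℕ)
    (hx : x ≠ 0) (hw : w ≠ 0) (h : x ^ n + x⁻¹ ^ n = w * x ^ n + w⁻¹ * x⁻¹ ^ n) :
    w = 1 ∨ x ^ (2 * n) * w = 1 := by
  have hxn : x ^ n * x⁻¹ ^ n = 1 := by rw [← mul_pow, mul_inv_cancel₀ hx, one_pow]
  have hwinv : w * w⁻¹ = 1 := mul_inv_cancel₀ hw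
  have hfactor : (1 - w) * (x ^ (2 * n) * w - 1) = 0 := by
    rw [two_mul, pow_add]
    linear_combination (w * x ^ n) * h + (1 - w) * hxn + x ^ n * x⁻¹ ^ n * hwinv
  rcases mul_eq_zero.1 hfactor with h1 | h2
  · exact Or.inl (sub_eq_zero.1 h1).symm
  · exact Or.inr (sub_eq_zero.1 h2)

lemma sign_mul_pow_ten_of_pow_three {K : Type*} [Field K] {s w : K}
    (hs : s ^ 2 = 1) (hw : w ^ 3 = s) : s * w ^ 10 = w ∧ s * w⁻¹ ^ 10 = w⁻¹ := by
  have hpow : s * w ^ 10 = w := by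
    linear_combination (s * w * (w ^ 6 + w ^ 3 * s + s ^ 2)) * hw + w * (s ^ 2 + 1) * hs
  have hinv : s⁻¹ = s := inv_eq_of_mul_eq_one_right (by rw [← sq, hs])
  refine ⟨hpow, ?_⟩
  rw [← hinv, inv_pow, ← mul_inv, hpow]

theorem invariants_injective_general (h₁ h₂ ε₁ ε₂ : ℂ)
    (hp₁ : IsPrimitiveRoot h₁ 48)
    (hε₁ : ε₁ = 1 ∨ ε₁ = -1) (hε₂ : ε₂ = 1 ∨ ε₂ = -1)
    (hanom : ε₁ * h₁⁻¹ ^ 3 = ε₂ * h₂⁻¹ ^ 3)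
    (hpsi : -ε₁ * (h₁ ^ 10 + h₁⁻¹ ^ 10) = -ε₂ * (h₂ ^ 10 + h₂⁻¹ ^ 10)) :
    h₁ = h₂ ∧ ε₁ = ε₂ := by
  have hsq₁ : ε₁ ^ 2 = 1 := by rcases hε₁ with rfl | rfl <;> norm_num
  have hsq₂ : ε₂ ^ 2 = 1 := by rcases hε₂ with rfl | rfl <;> norm_num
  have hx : h₁ ≠ 0 := hp₁.ne_zero (by norm_num)
  obtain ⟨w, rfl⟩ : ∃ w, h₂ = w * h₁ := ⟨h₂ / h₁, (div_mul_cancel₀ h₂ hx).symm⟩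
  have hw : w ≠ 0 := by
    rintro rfl
    simp [hx] at hanom
    simp [hanom] at hsq₁
  have hw3 : w ^ 3 = ε₁ * ε₂ := by
    field_simp at hanom
    linear_combination ε₁ * hanom - w ^ 3 * hsq₁
  obtain ⟨hw10, hwinv10⟩ := sign_mul_pow_ten_of_pow_three
    (by linear_combination ε₂ ^ 2 * hsq₁ + hsq₂) hw3
  have hten : h₁ ^ 10 + h₁⁻¹ ^ 10 = w * h₁ ^ 10 + w⁻¹ * h₁⁻¹ ^ 10 := by
    rw [mul_inv, mul_pow, mul_pow] at hpsi
    linear_combination (-ε₁) * hpsi - (h₁ ^ 10 + h₁⁻¹ ^ 10) * hsq₁ + h₁ ^ 10 * hw10 +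
      h₁⁻¹ ^ 10 * hwinv10
  rcases eq_one_or_pow_two_mul_mul_eq_one 10 hx hw hten with rfl | hw20
  · refine ⟨(one_mul h₁).symm, ?_⟩
    linear_combination ε₁ * hw3 + ε₂ * hsq₁
  · have hw6 : w ^ 6 = 1 := by
      linear_combination (w ^ 3 + ε₁ * ε₂) * hw3 + ε₂ ^ 2 * hsq₁ + hsq₂
    have h120 : h₁ ^ 120 = 1 :=
      calc h₁ ^ 120 = (h₁ ^ (2 * 10) * w) ^ 6 := by rw [mul_pow, hw6, mul_one, ← pow_mul]
        _ = 1 := by rw [hw20, one_pow]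
    exact absurd ((hp₁.pow_eq_one_iff_dvd 120).1 h120) (by norm_num)

theorem invariants_injective (h₁ h₂ ε₁ ε₂ : ℂ)
    (hp₁ : IsPrimitiveRoot h₁ 48) (hp₂ : IsPrimitiveRoot h₂ 48)
    (hε₁ : ε₁ = 1 ∨ ε₁ = -1) (hε₂ : ε₂ = 1 ∨ ε₂ = -1)
    (hdim : 24 / (h₁ ^ 2 + h₁⁻¹ ^ 2) ^ 2 = 24 / (h₂ ^ 2 + h₂⁻¹ ^ 2) ^ 2)
    (hanom : ε₁ * h₁⁻¹ ^ 3 = ε₂ * h₂⁻¹ ^ 3)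
    (hpsi : -ε₁ * (h₁ ^ 10 + h₁⁻¹ ^ 10) = -ε₂ * (h₂ ^ 10 + h₂⁻¹ ^ 10)) :
    h₁ = h₂ ∧ ε₁ = ε₂ :=
  invariants_injective_general h₁ h₂ ε₁ ε₂ hp₁ hε₁ hε₂ hanom hpsi
end
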